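/- In the algebra B = B(η, φ): the element c is idempotent, and the eigenspaces of the left-multiplication operator by c are exactly: the 1-eigenspace F • c, the 0-eigenspace F • (π • c − ρ), and the η-eigenspace F • ((η − φ) • c + η • d + ρ); moreover B is the internal direct sum of these three eigenspaces. The same statements hold with c and d interchanged. -/
import Mathlib


/-- The `lam`-eigenspace of the left-multiplication operator by `x`. -/
def eigSp (F : Type*) {A : Type*} [Field F] [NonUnitalNonAssocCommRing A] [Module F A]
    [SMulCommClass F A A] (x : A) (lam : F) : Submodule F A where
  carrier := {y | x * y = lam • y}
  add_mem' := by
    intro y z hy hz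
    simp only [Set.mem_setOf_eq] at *
    rw [mul_add, hy, hz, smul_add]
  zero_mem' := by simp
  smul_mem' := by
    intro c y hy
    simp only [Set.mem_setOf_eq] at *
    rw [mul_smul_comm, hy, smul_smul, smul_smul, mul_comm]

lemma mem_eigSp {F A : Type*} [Field F] [NonUnitalNonAssocCommRing A] [Module F A]
    [SMulCommClass F A A] {x : A} {lam : F} {y : A} :
    y ∈ eigSp F x lam ↔ x * y = lam • y := Iff.rfl

lemma key_half {F B : Type*} [Field F] [NonUnitalNonAssocCommRing B] [Module F B]
    [SMulCommClass F B B]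
    (η φ : F) (hη0 : η ≠ 0) (hη1 : η ≠ 1)
    (c d ρ : B)
    (hzero : ∀ a b e : F, a • c + b • d + e • ρ = 0 → a = 0 ∧ b = 0 ∧ e = 0)
    (hrep : ∀ x : B, ∃ a b e : F, x = a • c + b • d + e • ρ)
    (hcc : c * c = c)
    (hcd : c * d = η • c + η • d + ρ)
    (hcρ : c * ρ = ((1 - η) * φ - η) • c) :
    c * c = c ∧
      eigSp F c (1 : F) = Submodule.span F {c} ∧
      eigSp F c (0 : F) = Submodule.span F {((1 - η) * φ - η) • c - ρ} ∧
      eigSp F c η = Submodule.span F {(η - φ) • c + η • d + ρ} ∧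
      ∀ x : B, ∃! t : B × B × B, t.1 ∈ eigSp F c (1 : F) ∧ t.2.1 ∈ eigSp F c (0 : F) ∧
        t.2.2 ∈ eigSp F c η ∧ x = t.1 + t.2.1 + t.2.2 := by
  set π : F := (1 - η) * φ - η with hπ
  have h1η : (1 : F) - η ≠ 0 := sub_ne_zero.mpr (Ne.symm hη1)
  have mulc : ∀ a b e : F, c * (a • c + b • d + e • ρ)
      = (a + b * η + e * π) • c + (b * η) • d + b • ρ := by
    intro a b e
    rw [mul_add, mul_add, mul_smul_comm, mul_smul_comm, mul_smul_comm, hcc, hcd, hcρ]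
    module
  have eqcoef : ∀ a b e a' b' e' : F, a • c + b • d + e • ρ = a' • c + b' • d + e' • ρ →
      a = a' ∧ b = b' ∧ e = e' := by
    intro a b e a' b' e' h
    have h0 : (a - a') • c + (b - b') • d + (e - e') • ρ = 0 := by
      have h' : (a - a') • c + (b - b') • d + (e - e') • ρ
          = (a • c + b • d + e • ρ) - (a' • c + b' • d + e' • ρ) := by module
      rw [h', h, sub_self]
    obtain ⟨h1, h2, h3⟩ := hzero _ _ _ h0
    exact ⟨sub_eq_zero.mp h1, sub_eq_zero.mp h2, sub_eq_zero.mp h3⟩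
  -- eigenspace 1
  have e1 : eigSp F c (1 : F) = Submodule.span F {c} := by
    ext y
    rw [mem_eigSp, Submodule.mem_span_singleton]
    constructor
    · intro hy
      obtain ⟨a, b, e, rfl⟩ := hrep y
      rw [mulc, one_smul] at hy
      obtain ⟨h1, h2, h3⟩ := eqcoef _ _ _ _ _ _ hy
      have hb : b = 0 := by
        have : b * (η - 1) = 0 := by linear_combination h2
        rcases mul_eq_zero.mp this with h | h
        · exact h
        · exact absurd h (sub_ne_zero.mpr hη1)
      have he : e = 0 := by rw [← h3, hb]
      exact ⟨a, by rw [hb, he]; module⟩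
    · rintro ⟨t, rfl⟩
      rw [mul_smul_comm, hcc, one_smul]
  -- eigenspace 0
  have e0 : eigSp F c (0 : F) = Submodule.span F {π • c - ρ} := by
    ext y
    rw [mem_eigSp, Submodule.mem_span_singleton]
    constructor
    · intro hy
      obtain ⟨a, b, e, rfl⟩ := hrep y
      rw [mulc, zero_smul] at hy
      obtain ⟨h1, h2, h3⟩ := hzero _ _ _ hy
      have hb : b = 0 := h3
      have ha : a = -e * π := by
        have := h1
        rw [hb] at this
        linear_combination this
      exact ⟨-e, by rw [ha, hb]; module⟩
    · rintro ⟨t, rfl⟩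
      have hv : c * (π • c - ρ) = 0 := by
        rw [mul_sub, mul_smul_comm, hcc, hcρ, sub_self]
      rw [mul_smul_comm, hv, smul_zero, zero_smul]
  -- eigenspace η
  have eη : eigSp F c η = Submodule.span F {(η - φ) • c + η • d + ρ} := by
    have hv : c * ((η - φ) • c + η • d + ρ) = η • ((η - φ) • c + η • d + ρ) := by
      rw [mul_add, mul_add, mul_smul_comm, mul_smul_comm, hcc, hcd, hcρ]
      match_scalars <;> ring
    ext y
    rw [mem_eigSp, Submodule.mem_span_singleton]
    constructor
    · intro hy
      obtain ⟨a, b, e, rfl⟩ := hrep y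
      rw [mulc] at hy
      have hy' : (a + b * η + e * π) • c + (b * η) • d + b • ρ
          = (η * a) • c + (η * b) • d + (η * e) • ρ := by rw [hy]; module
      obtain ⟨h1, h2, h3⟩ := eqcoef _ _ _ _ _ _ hy'
      have hb : b = η * e := h3
      have ha : a = e * (η - φ) := by
        apply mul_left_cancel₀ h1η
        rw [hb] at h1
        linear_combination h1
      exact ⟨e, by rw [ha, hb]; module⟩
    · rintro ⟨t, rfl⟩
      rw [mul_smul_comm, hv, smul_comm]
  refine ⟨hcc, e1, e0, eη, ?_⟩
  -- direct sum decomposition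
  intro x
  obtain ⟨a, b, e, rfl⟩ := hrep x
  refine ⟨((a - (b / η - e) * π - (b / η) * (η - φ)) • c,
          (b / η - e) • (π • c - ρ),
          (b / η) • ((η - φ) • c + η • d + ρ)), ⟨?_, ?_, ?_, ?_⟩, ?_⟩
  · rw [e1]; exact Submodule.smul_mem _ _ (Submodule.mem_span_singleton_self _)
  · rw [e0]; exact Submodule.smul_mem _ _ (Submodule.mem_span_singleton_self _)
  · rw [eη]; exact Submodule.smul_mem _ _ (Submodule.mem_span_singleton_self _)
  · dsimp only
    match_scalars <;> field_simp <;> ring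
  · rintro ⟨y1, y2, y3⟩ ⟨m1, m2, m3, hsum⟩
    rw [e1, Submodule.mem_span_singleton] at m1
    rw [e0, Submodule.mem_span_singleton] at m2
    rw [eη, Submodule.mem_span_singleton] at m3
    obtain ⟨s1, rfl⟩ := m1
    obtain ⟨s2, rfl⟩ := m2
    obtain ⟨s3, rfl⟩ := m3
    have hsum' : a • c + b • d + e • ρ
        = (s1 + s2 * π + s3 * (η - φ)) • c + (s3 * η) • d + (-s2 + s3) • ρ := by
      rw [hsum]; dsimp only; module
    obtain ⟨h1, h2, h3⟩ := eqcoef _ _ _ _ _ _ hsum'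
    have hs3 : s3 = b / η := by field_simp; linear_combination -h2
    have hs2 : s2 = b / η - e := by rw [← hs3]; linear_combination h3
    have hs1 : s1 = a - (b / η - e) * π - (b / η) * (η - φ) := by
      rw [← hs2, ← hs3]; linear_combination -h1
    simp only [Prod.mk.injEq]
    exact ⟨by rw [hs1], by rw [hs2], by rw [hs3]⟩

/-- in the algebra `B = B(η, φ)` — the commutative `F`-algebra with basis
`{c, d, ρ}` and multiplication `c·c = c`, `d·d = d`, `c·d = η•c + η•d + ρ`, `c·ρ = π•c`,
`d·ρ = π•d`, `ρ·ρ = π•ρ` where `π = (1−η)φ − η` — the element `c` is idempotent, its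
left-multiplication eigenspaces are exactly `F•c` (eigenvalue 1), `F•(π•c − ρ)`
(eigenvalue 0) and `F•((η−φ)•c + η•d + ρ)` (eigenvalue η), and `B` is the internal direct
sum of these; and the same holds with `c` and `d` interchanged. -/
theorem B_eta_phi_eigenspaces
    {F B : Type*} [Field F] [NonUnitalNonAssocCommRing B] [Module F B]
    [SMulCommClass F B B] [IsScalarTower F B B]
    (h2 : (2 : F) ≠ 0) (η φ π : F) (hη0 : η ≠ 0) (hη1 : η ≠ 1)
    (hπ : π = (1 - η) * φ - η)
    (c d ρ : B)
    (hind : LinearIndependent F ![c, d, ρ])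
    (hspan : Submodule.span F ({c, d, ρ} : Set B) = ⊤)
    (hcc : c * c = c) (hdd : d * d = d)
    (hcd : c * d = η • c + η • d + ρ)
    (hcρ : c * ρ = π • c) (hdρ : d * ρ = π • d) (hρρ : ρ * ρ = π • ρ) :
    (c * c = c ∧
      eigSp F c (1 : F) = Submodule.span F {c} ∧
      eigSp F c (0 : F) = Submodule.span F {π • c - ρ} ∧
      eigSp F c η = Submodule.span F {(η - φ) • c + η • d + ρ} ∧
      ∀ x : B, ∃! t : B × B × B, t.1 ∈ eigSp F c (1 : F) ∧ t.2.1 ∈ eigSp F c (0 : F) ∧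
        t.2.2 ∈ eigSp F c η ∧ x = t.1 + t.2.1 + t.2.2) ∧
    (d * d = d ∧
      eigSp F d (1 : F) = Submodule.span F {d} ∧
      eigSp F d (0 : F) = Submodule.span F {π • d - ρ} ∧
      eigSp F d η = Submodule.span F {(η - φ) • d + η • c + ρ} ∧
      ∀ x : B, ∃! t : B × B × B, t.1 ∈ eigSp F d (1 : F) ∧ t.2.1 ∈ eigSp F d (0 : F) ∧
        t.2.2 ∈ eigSp F d η ∧ x = t.1 + t.2.1 + t.2.2) := by
  subst hπ
  have hzero : ∀ a b e : F, a • c + b • d + e • ρ = 0 → a = 0 ∧ b = 0 ∧ e = 0 := by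
    intro a b e h
    have H := Fintype.linearIndependent_iff.mp hind ![a, b, e]
      (by simpa [Fin.sum_univ_three] using h)
    exact ⟨by simpa using H 0, by simpa using H 1, by simpa using H 2⟩
  have hrep : ∀ x : B, ∃ a b e : F, x = a • c + b • d + e • ρ := by
    intro x
    have hx : x ∈ Submodule.span F ({c, d, ρ} : Set B) := by rw [hspan]; trivial
    rw [Submodule.mem_span_insert] at hx
    obtain ⟨a, z, hz, rfl⟩ := hx
    rw [Submodule.mem_span_insert] at hz
    obtain ⟨b, w, hw, rfl⟩ := hz
    rw [Submodule.mem_span_singleton] at hw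
    obtain ⟨e, rfl⟩ := hw
    exact ⟨a, b, e, by module⟩
  have hzero' : ∀ a b e : F, a • d + b • c + e • ρ = 0 → a = 0 ∧ b = 0 ∧ e = 0 := by
    intro a b e h
    obtain ⟨h1, h2, h3⟩ := hzero b a e (by rw [← h]; module)
    exact ⟨h2, h1, h3⟩
  have hrep' : ∀ x : B, ∃ a b e : F, x = a • d + b • c + e • ρ := by
    intro x
    obtain ⟨a, b, e, h⟩ := hrep x
    exact ⟨b, a, e, by rw [h]; module⟩
  have hdc : d * c = η • d + η • c + ρ := by rw [mul_comm, hcd]; module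
  exact ⟨key_half η φ hη0 hη1 c d ρ hzero hrep hcc hcd hcρ,
         key_half η φ hη0 hη1 d c ρ hzero' hrep' hdd hdc hdρ⟩
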